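/- Let R be a Noetherian ring and L an R-module. Define Att_R(L) := {𝔭 ∈ Spec R : 𝔭 = Ann_R(L/K) for some submodule K of L}. Then the set of minimal elements of V(Ann_R(L)) coincides with the set of minimal elements of Att_R(L); in particular Rad(Ann_R(L)) = ∩_{𝔭 ∈ Att_R(L)} 𝔭. -/

import Mathlib

open CategoryTheory
open scoped Classical

universe u

/-- Cohomological dimension `cd(J, M)`: the supremum of the integers `i` such that the
local cohomology module `H^i_J(M)` is nonzero (`⊥` if there are none). -/
noncomputable def cohDim {R : Type u} [CommRing R] (J : Ideal R) (M : ModuleCat.{u} R) :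
    WithBot ℕ∞ :=
  sSup {n : WithBot ℕ∞ | ∃ i : ℕ, n = i ∧ Nontrivial ((localCohomology J i).obj M)}

/-- Krull dimension of a module: the Krull dimension of its support. -/
noncomputable def modDim (R : Type u) [CommRing R] (M : Type u) [AddCommGroup M] [Module R M] :
    WithBot ℕ∞ :=
  Order.krullDim (Module.support R M)

/-- Attached primes in the general (Macdonald–Sharp style) sense: primes arising as
annihilators of quotients of `L`. -/
def attachedPrimes (R : Type u) [CommRing R] (L : Type u) [AddCommGroup L] [Module R L] :
    Set (Ideal R) :=
  {p | p.IsPrime ∧ ∃ K : Submodule R L, p = Module.annihilator R (L ⧸ K)}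

/-- `N` is a `p`-primary submodule of `M` (over a Noetherian ring this is the classical
notion): the set of associated primes of `M/N` is exactly `{p}`. -/
def IsPrimaryFor {R : Type u} [CommRing R] {M : Type u} [AddCommGroup M] [Module R M]
    (p : Ideal R) (N : Submodule R M) : Prop :=
  associatedPrimes R (M ⧸ N) = {p}

/-! Every attached prime contains `Ann(L)`, so everything follows once each minimal prime `p` of
`Ann(L)` is shown to be attached. As `R` is Noetherian, some `Ann(L/K)` is maximal among the
annihilators of quotients of `L` contained in `p`. Its colon ideals `(Ann(L/K) : x)` are again
such annihilators, namely `Ann(L/(K :_L x))`, so maximality forces `Ann(L/K)` to be prime, and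
minimality of `p` then gives `p = Ann(L/K)`. -/

theorem Ideal.isPrime_of_forall_colon_le {R : Type*} [CommRing R] {a p : Ideal R} (hp : p.IsPrime)
    (hap : a ≤ p) (hcolon : ∀ x : R, a.colon (Ideal.span {x}) ≤ p → a.colon (Ideal.span {x}) ≤ a) :
    a.IsPrime := by
  have colon_le_of_notMem : ∀ m ∉ p, a.colon (Ideal.span {m}) ≤ a := fun m hm =>
    hcolon m fun u hu => by
      have hum : u * m ∈ p := hap (Ideal.mem_colon_span_singleton.mp hu)
      exact (hp.mem_or_mem hum).resolve_right hm
  refine ⟨fun ha => hp.ne_top (top_le_iff.mp (ha ▸ hap)), fun {x y} hxy => ?_⟩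
  by_cases hx : a.colon (Ideal.span {x}) ≤ p
  · exact .inr (hcolon x hx (Ideal.mem_colon_span_singleton.mpr (mul_comm x y ▸ hxy)))
  · obtain ⟨u, hu, hup⟩ := SetLike.not_le_iff_exists.mp hx
    exact .inl (colon_le_of_notMem u hup (Ideal.mem_colon_span_singleton.mpr
      (mul_comm u x ▸ Ideal.mem_colon_span_singleton.mp hu)))

section AttachedPrimes

variable {R : Type u} [CommRing R] {L : Type u} [AddCommGroup L] [Module R L]

theorem mem_annihilator_quotient_iff {K : Submodule R L} {r : R} :
    r ∈ Module.annihilator R (L ⧸ K) ↔ ∀ x : L, r • x ∈ K := by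
  simp [Submodule.annihilator_quotient, Submodule.mem_colon]

theorem annihilator_le_annihilator_quotient (K : Submodule R L) :
    Module.annihilator R L ≤ Module.annihilator R (L ⧸ K) :=
  LinearMap.annihilator_le_of_surjective K.mkQ K.mkQ_surjective

theorem annihilator_quotient_comap_lsmul (K : Submodule R L) (x : R) :
    Module.annihilator R (L ⧸ K.comap (LinearMap.lsmul R L x)) =
      (Module.annihilator R (L ⧸ K)).colon (Ideal.span {x}) := by
  ext r
  simp [mem_annihilator_quotient_iff, mul_smul]

theorem annihilator_le_of_mem_attachedPrimes {p : Ideal R} (hp : p ∈ attachedPrimes R L) :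
    Module.annihilator R L ≤ p := by
  obtain ⟨-, K, rfl⟩ := hp
  exact annihilator_le_annihilator_quotient K

theorem mem_attachedPrimes_of_mem_minimalPrimes [IsNoetherianRing R] {p : Ideal R}
    (hp : p ∈ (Module.annihilator R L).minimalPrimes) : p ∈ attachedPrimes R L := by
  obtain ⟨⟨hpp, hLp⟩, hpmin⟩ := hp
  obtain ⟨a, ⟨⟨K, rfl⟩, hap⟩, hmax⟩ := exists_maximal_of_wellFoundedGT
    (fun a : Ideal R => (∃ K : Submodule R L, a = Module.annihilator R (L ⧸ K)) ∧ a ≤ p)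
    ⟨_, ⟨⊥, rfl⟩, (LinearEquiv.annihilator_eq (Submodule.quotEquivOfEqBot ⊥ rfl)).trans_le hLp⟩
  have hprime : (Module.annihilator R (L ⧸ K)).IsPrime := by
    refine Ideal.isPrime_of_forall_colon_le hpp hap fun x hx => ?_
    rw [← annihilator_quotient_comap_lsmul] at hx ⊢
    exact hmax ⟨⟨_, rfl⟩, hx⟩ (annihilator_quotient_comap_lsmul K x ▸ Ideal.le_colon)
  have hpa := hpmin ⟨hprime, annihilator_le_annihilator_quotient K⟩ hap
  exact ⟨hpp, K, le_antisymm hpa hap⟩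

end AttachedPrimes

theorem setOf_minimal_eq_of_subset {α : Type*} [PartialOrder α] {A V : Set α} (hAV : A ⊆ V)
    (hV : ∀ p ∈ V, ∃ q ∈ A, q ≤ p) :
    {p ∈ V | ∀ q ∈ V, q ≤ p → q = p} = {p ∈ A | ∀ q ∈ A, q ≤ p → q = p} := by
  ext p
  constructor
  · rintro ⟨hpV, hpmin⟩
    obtain ⟨q, hqA, hqp⟩ := hV p hpV
    exact ⟨hpmin q (hAV hqA) hqp ▸ hqA, fun q hq => hpmin q (hAV hq)⟩
  · rintro ⟨hpA, hpmin⟩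
    refine ⟨hAV hpA, fun q hqV hqp => ?_⟩
    obtain ⟨r, hrA, hrq⟩ := hV q hqV
    exact le_antisymm hqp (hpmin r hrA (hrq.trans hqp) ▸ hrq)

theorem stmt13 {R : Type u} [CommRing R] [IsNoetherianRing R]
    (L : Type u) [AddCommGroup L] [Module R L] :
    {p ∈ {q : Ideal R | q.IsPrime ∧ Module.annihilator R L ≤ q} |
        ∀ q ∈ {q : Ideal R | q.IsPrime ∧ Module.annihilator R L ≤ q}, q ≤ p → q = p} =
      {p ∈ attachedPrimes R L | ∀ q ∈ attachedPrimes R L, q ≤ p → q = p} ∧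
    (Module.annihilator R L).radical = ⨅ p ∈ attachedPrimes R L, p := by
  have minimalPrimes_subset : (Module.annihilator R L).minimalPrimes ⊆ attachedPrimes R L :=
    fun p hp => mem_attachedPrimes_of_mem_minimalPrimes hp
  refine ⟨setOf_minimal_eq_of_subset
    (fun p hp => ⟨hp.1, annihilator_le_of_mem_attachedPrimes hp⟩) fun p ⟨hp, hLp⟩ => ?_, ?_⟩
  · obtain ⟨q, hq, hqp⟩ := Ideal.exists_minimalPrimes_le hLp
    exact ⟨q, minimalPrimes_subset hq, hqp⟩
  · refine le_antisymm (le_iInf₂ fun p hp => ?_) ?_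
    · exact hp.1.radical_le_iff.mpr (annihilator_le_of_mem_attachedPrimes hp)
    · rw [← Ideal.sInf_minimalPrimes]
      exact le_sInf fun q hq => iInf₂_le q (minimalPrimes_subset hq)
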